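/- Let X be a real Banach space, J its duality mapping, A : X → X* a bounded linear monotone operator with ‖A‖ = 1, and f* ∈ X* with ‖f*‖ = 1. Assume that for every λ > 0 and every ε > 0, whenever (Ax + λ·Jx) ∩ B̄(f*, ε) ≠ ∅ one has ⟨x, f*⟩ ≤ 3ε (the 'whs' condition). Then for every λ > 0, the distance from f* to ran(A + λJ) is at least m(λ) = (3λ² + 9λ + 4 − (λ+1)√(9λ² + 36λ + 16))/(4λ + 2) > 0. -/

import Mathlib

/-! If `‖A x + λ x* - f‖ ≤ ε` with `x* ∈ J x` and `t = ‖x‖`, testing the residual against `x`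
and using `⟨A x, x⟩ ≥ 0` and the whs condition gives `λ t² ≤ ε t + 3 ε`, while the triangle
inequality gives `1 - ε ≤ (1 + λ) t`. These are incompatible once `ε` is below the smaller root
`m(λ)` of `q(ε) = (2λ + 1) ε² - (3λ² + 9λ + 4) ε + λ`, because `(1 + λ)² q(ε)` is the value of
`λ t² - ε t - 3 ε` at `t = (1 - ε) / (1 + λ)`, beyond its vertex. -/

open NormedSpace

/-- The duality mapping of a real normed space: `x* ∈ J x` iff `⟨x, x*⟩ = ‖x‖² = ‖x*‖²`. -/
def dualityMap {X : Type*} [NormedAddCommGroup X] [NormedSpace ℝ X] (x : X) :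
    Set (StrongDual ℝ X) :=
  {f | f x = ‖x‖ ^ 2 ∧ ‖x‖ ^ 2 = ‖f‖ ^ 2}

section RealBound

noncomputable def whsQuadratic (lam ε : ℝ) : ℝ :=
  (2 * lam + 1) * ε ^ 2 - (3 * lam ^ 2 + 9 * lam + 4) * ε + lam

noncomputable def whsRoot (lam : ℝ) : ℝ :=
  (3 * lam ^ 2 + 9 * lam + 4 - (lam + 1) * Real.sqrt (9 * lam ^ 2 + 36 * lam + 16)) /
    (4 * lam + 2)

variable {lam : ℝ}

lemma sq_sqrt_whsDiscriminant (hlam : 0 < lam) :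
    Real.sqrt (9 * lam ^ 2 + 36 * lam + 16) ^ 2 = 9 * lam ^ 2 + 36 * lam + 16 :=
  Real.sq_sqrt (by positivity)

lemma whsRoot_pos (hlam : 0 < lam) : 0 < whsRoot lam := by
  have hs := sq_sqrt_whsDiscriminant hlam
  have hs0 := Real.sqrt_nonneg (9 * lam ^ 2 + 36 * lam + 16)
  refine div_pos ?_ (by linarith)
  nlinarith [mul_nonneg (by linarith : (0:ℝ) ≤ lam + 1) hs0]

lemma whsRoot_lt (hlam : 0 < lam) : whsRoot lam < lam / (2 * lam + 1) := by
  have hs := sq_sqrt_whsDiscriminant hlam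
  have hs0 := Real.sqrt_nonneg (9 * lam ^ 2 + 36 * lam + 16)
  have hgt : 3 * lam + 4 < Real.sqrt (9 * lam ^ 2 + 36 * lam + 16) := by nlinarith
  rw [whsRoot, div_lt_div_iff₀ (by linarith) (by linarith)]
  nlinarith [mul_lt_mul_of_pos_left hgt (by linarith : (0:ℝ) < lam + 1)]

lemma whsQuadratic_pos_of_lt_whsRoot {ε : ℝ} (hlam : 0 < lam) (hε : ε < whsRoot lam) :
    0 < whsQuadratic lam ε := by
  set s := Real.sqrt (9 * lam ^ 2 + 36 * lam + 16)
  have hs : s ^ 2 = 9 * lam ^ 2 + 36 * lam + 16 := sq_sqrt_whsDiscriminant hlam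
  have hs0 : 0 ≤ s := Real.sqrt_nonneg _
  have hden : (0:ℝ) < 4 * lam + 2 := by linarith
  have hsmall : ε * (4 * lam + 2) < 3 * lam ^ 2 + 9 * lam + 4 - (lam + 1) * s :=
    (lt_div_iff₀ hden).mp hε
  have hls : 0 ≤ (lam + 1) * s := mul_nonneg (by linarith) hs0
  -- `4 (2λ + 1) q(ε)` is the product of the distances of `ε` to the two roots.
  have hroots : 0 < (3 * lam ^ 2 + 9 * lam + 4 - ε * (4 * lam + 2) - (lam + 1) * s) *
      (3 * lam ^ 2 + 9 * lam + 4 - ε * (4 * lam + 2) + (lam + 1) * s) :=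
    mul_pos (by linarith) (by linarith)
  unfold whsQuadratic
  nlinarith

lemma whsRoot_le {t ε : ℝ} (hlam : 0 < lam) (ht : 0 ≤ t)
    (hupper : lam * t ^ 2 ≤ ε * t + 3 * ε) (hlower : 1 - ε ≤ (1 + lam) * t) :
    whsRoot lam ≤ ε := by
  by_contra! hε
  have hq := whsQuadratic_pos_of_lt_whsRoot hlam hε
  have hsmall : (1 + lam) * ε < lam * (1 - ε) := by
    have := (lt_div_iff₀ (by linarith : (0:ℝ) < 2 * lam + 1)).mp (hε.trans (whsRoot_lt hlam))
    linarith
  -- With `g t = λ t² - ε t - 3 ε` and `t₀ = (1 - ε) / (1 + λ)`, the difference `g t - g t₀`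
  -- factors as `(t - t₀) (λ (t + t₀) - ε)`, and both factors are nonnegative.
  have hgap : 0 ≤ (1 + lam) * t - (1 - ε) := by linarith
  have hslope : 0 ≤ lam * ((1 + lam) * t + (1 - ε)) - (1 + lam) * ε := by
    nlinarith [mul_nonneg hlam.le ht]
  have hincr := mul_nonneg hgap hslope
  have hneg : 0 ≤ (ε * t + 3 * ε - lam * t ^ 2) * (1 + lam) ^ 2 :=
    mul_nonneg (by linarith) (sq_nonneg _)
  unfold whsQuadratic at hq
  nlinarith

end RealBound

section Residual

variable {X : Type*} [NormedAddCommGroup X] [NormedSpace ℝ X]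

lemma norm_eq_of_mem_dualityMap {x : X} {xs : StrongDual ℝ X} (h : xs ∈ dualityMap x) :
    ‖xs‖ = ‖x‖ :=
  (pow_left_inj₀ (norm_nonneg _) (norm_nonneg _) two_ne_zero).mp h.2.symm

lemma zero_mem_dualityMap : (0 : StrongDual ℝ X) ∈ dualityMap (0 : X) := by
  simp [dualityMap]

variable {A : X →L[ℝ] StrongDual ℝ X} {f xs : StrongDual ℝ X} {x : X} {lam ε : ℝ}

lemma mul_sq_norm_le_of_residual (hAx : 0 ≤ A x x) (hxs : xs ∈ dualityMap x)
    (hres : ‖A x + lam • xs - f‖ ≤ ε) :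
    lam * ‖x‖ ^ 2 ≤ ε * ‖x‖ + f x := by
  have hpair : (A x + lam • xs - f) x = A x x + lam * ‖x‖ ^ 2 - f x := by
    simp [hxs.1]
  have hbound : (A x + lam • xs - f) x ≤ ε * ‖x‖ :=
    calc (A x + lam • xs - f) x ≤ ‖A x + lam • xs - f‖ * ‖x‖ :=
          (le_abs_self _).trans ((A x + lam • xs - f).le_opNorm x)
      _ ≤ ε * ‖x‖ := mul_le_mul_of_nonneg_right hres (norm_nonneg x)
  linarith

lemma norm_le_of_residual (hlam : 0 ≤ lam) (hxs : xs ∈ dualityMap x)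
    (hres : ‖A x + lam • xs - f‖ ≤ ε) :
    ‖f‖ ≤ (‖A‖ + lam) * ‖x‖ + ε :=
  calc ‖f‖ ≤ ‖A x + lam • xs‖ + ‖A x + lam • xs - f‖ := norm_le_norm_add_norm_sub _ _
    _ ≤ (‖A‖ * ‖x‖ + lam * ‖x‖) + ε := by
        gcongr
        refine (norm_add_le _ _).trans (add_le_add (A.le_opNorm x) ?_)
        rw [norm_smul, Real.norm_of_nonneg hlam, norm_eq_of_mem_dualityMap hxs]
    _ = (‖A‖ + lam) * ‖x‖ + ε := by ring

end Residual

theorem stmt14_general {X : Type*} [NormedAddCommGroup X] [NormedSpace ℝ X]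
    (A : X →L[ℝ] StrongDual ℝ X)
    (hmono : ∀ x y : X, 0 ≤ (A x - A y) (x - y)) (hA : ‖A‖ = 1)
    (f : StrongDual ℝ X) (hf : ‖f‖ = 1)
    (hwhs : ∀ lam > (0:ℝ), ∀ ε > (0:ℝ), ∀ x : X,
      (∃ xs ∈ dualityMap x, ‖A x + lam • xs - f‖ ≤ ε) → f x ≤ 3 * ε)
    (lam : ℝ) (hlam : 0 < lam) :
    Metric.infDist f {g : StrongDual ℝ X | ∃ x xs, xs ∈ dualityMap x ∧ g = A x + lam • xs} ≥
      (3 * lam ^ 2 + 9 * lam + 4 - (lam + 1) * Real.sqrt (9 * lam ^ 2 + 36 * lam + 16)) /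
        (4 * lam + 2) ∧
    0 < (3 * lam ^ 2 + 9 * lam + 4 - (lam + 1) * Real.sqrt (9 * lam ^ 2 + 36 * lam + 16)) /
        (4 * lam + 2) := by
  refine ⟨(Metric.le_infDist ?_).mpr ?_, whsRoot_pos hlam⟩
  · exact ⟨_, 0, 0, zero_mem_dualityMap, rfl⟩
  rintro _ ⟨x, xs, hxs, rfl⟩
  refine le_of_forall_gt_imp_ge_of_dense fun ε hε => ?_
  have hres : ‖A x + lam • xs - f‖ ≤ ε := by
    rw [← dist_eq_norm, dist_comm]
    exact hε.le
  have hfx : f x ≤ 3 * ε := hwhs lam hlam ε (dist_nonneg.trans_lt hε) x ⟨xs, hxs, hres⟩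
  have hAx : 0 ≤ A x x := by simpa using hmono x 0
  have hupper := mul_sq_norm_le_of_residual hAx hxs hres
  have hlower := norm_le_of_residual hlam.le hxs hres
  rw [hA, hf] at hlower
  exact whsRoot_le hlam (norm_nonneg x) (by linarith) (by linarith)

theorem stmt14 {X : Type*} [NormedAddCommGroup X] [NormedSpace ℝ X] [CompleteSpace X]
    (A : X →L[ℝ] StrongDual ℝ X)
    (hmono : ∀ x y : X, 0 ≤ (A x - A y) (x - y)) (hA : ‖A‖ = 1)
    (f : StrongDual ℝ X) (hf : ‖f‖ = 1)
    (hwhs : ∀ lam > (0:ℝ), ∀ ε > (0:ℝ), ∀ x : X,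
      (∃ xs ∈ dualityMap x, ‖A x + lam • xs - f‖ ≤ ε) → f x ≤ 3 * ε)
    (lam : ℝ) (hlam : 0 < lam) :
    Metric.infDist f {g : StrongDual ℝ X | ∃ x xs, xs ∈ dualityMap x ∧ g = A x + lam • xs} ≥
      (3 * lam ^ 2 + 9 * lam + 4 - (lam + 1) * Real.sqrt (9 * lam ^ 2 + 36 * lam + 16)) /
        (4 * lam + 2) ∧
    0 < (3 * lam ^ 2 + 9 * lam + 4 - (lam + 1) * Real.sqrt (9 * lam ^ 2 + 36 * lam + 16)) /
        (4 * lam + 2) :=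
  stmt14_general A hmono hA f hf hwhs lam hlam
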